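/- If γ₁ is rank-1 homotopic to γ₁', γ₂ is rank-1 homotopic to γ₂', and γ₁(1) = γ₂(0) (so that also γ₁'(1) = γ₂'(0), since rank-1 homotopies are 2-paths and hence fix endpoints), then the composition γ₁∘γ₂ is rank-1 homotopic to γ₁'∘γ₂'. In particular, composition of 1-tracks (rank-1 homotopy classes of 1-paths) is well defined. -/

import Mathlib

open scoped Manifold

variable (E : Type*) [NormedAddCommGroup E] [NormedSpace ℝ E] [FiniteDimensional ℝ E]
variable {M : Type*} [TopologicalSpace M] [ChartedSpace E M]
  [IsManifold 𝓘(ℝ, E) (⊤ : ℕ∞) M]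

/-- A 1-path in `M`: a smooth map `ℝ → M` that is constant near `(-∞, 0]` and near
`[1, ∞)` (in the sense of the `ε`-conditions). -/
def IsOnePath (γ : ℝ → M) : Prop :=
  ContMDiff 𝓘(ℝ, ℝ) 𝓘(ℝ, E) (⊤ : ℕ∞) γ ∧
    ∃ ε > (0 : ℝ), (∀ t ≤ ε, γ t = γ 0) ∧ (∀ t, 1 - ε ≤ t → γ t = γ 1)

/-- A 2-path in `M`, as a smooth map `ℝ × ℝ → M` with coordinates `(s, t)`,
constant near the boundary in each variable, whose images at `t = 0` and `t = 1`
are single points. -/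
def IsTwoPath (g : ℝ × ℝ → M) : Prop :=
  ContMDiff 𝓘(ℝ, ℝ × ℝ) 𝓘(ℝ, E) (⊤ : ℕ∞) g ∧
    (∃ ε > (0 : ℝ),
      (∀ s t, s ≤ ε → g (s, t) = g (0, t)) ∧
      (∀ s t, 1 - ε ≤ s → g (s, t) = g (1, t)) ∧
      (∀ s t, t ≤ ε → g (s, t) = g (s, 0)) ∧
      (∀ s t, 1 - ε ≤ t → g (s, t) = g (s, 1))) ∧
    (∀ s s', g (s, 0) = g (s', 0)) ∧ (∀ s s', g (s, 1) = g (s', 1))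

/-- A rank-1 homotopy: a 2-path whose differential has rank at most 1 at every point. -/
def IsRank1Homotopy (h : ℝ × ℝ → M) : Prop :=
  IsTwoPath E h ∧
    ∀ p : ℝ × ℝ,
      Module.finrank ℝ
        (LinearMap.range (mfderiv 𝓘(ℝ, ℝ × ℝ) 𝓘(ℝ, E) h p).toLinearMap) ≤ 1

/-- Two 1-paths are rank-1 homotopic if they are joined by a rank-1 homotopy. -/
def Rank1Homotopic (γ γ' : ℝ → M) : Prop :=
  ∃ h : ℝ × ℝ → M, IsRank1Homotopy E h ∧ (∀ t, h (0, t) = γ t) ∧ (∀ t, h (1, t) = γ' t)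

/-- Composition of 1-paths. -/
noncomputable def compPath (γ₁ γ₂ : ℝ → M) : ℝ → M := fun t =>
  if t ≤ 1 / 2 then γ₁ (2 * t) else γ₂ (2 * t - 1)

/-!
Stack the two rank-1 homotopies `h₁, h₂` vertically: `h (s, ·)` is the composite path of
`h₁ (s, ·)` and `h₂ (s, ·)`.
Since `h₁` is constant near `t = 1` and `h₂` near `t = 0`, with the common value
`γ₁ 1 = γ₂ 0`, near every point `h` coincides with `h₁` or `h₂` precomposed with an affine
map of the plane. Hence `h` is smooth, and its differential factors through that of `h₁` or
`h₂`, so it still has rank at most one.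
-/

open Filter Topology Module

section FinrankMfderiv

variable {𝕜 : Type*} [NontriviallyNormedField 𝕜]
  {F₁ F₂ F₃ H₁ H₂ H₃ N₁ N₂ N₃ : Type*}
  [NormedAddCommGroup F₁] [NormedSpace 𝕜 F₁] [TopologicalSpace H₁] {I₁ : ModelWithCorners 𝕜 F₁ H₁}
  [TopologicalSpace N₁] [ChartedSpace H₁ N₁]
  [NormedAddCommGroup F₂] [NormedSpace 𝕜 F₂] [TopologicalSpace H₂] {I₂ : ModelWithCorners 𝕜 F₂ H₂}
  [TopologicalSpace N₂] [ChartedSpace H₂ N₂]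
  [NormedAddCommGroup F₃] [NormedSpace 𝕜 F₃] [FiniteDimensional 𝕜 F₃] [TopologicalSpace H₃]
  {I₃ : ModelWithCorners 𝕜 F₃ H₃} [TopologicalSpace N₃] [ChartedSpace H₃ N₃]

theorem finrank_range_mfderiv_comp_le {f : N₁ → N₂} {g : N₂ → N₃} {x : N₁}
    (hg : MDifferentiableAt I₂ I₃ g (f x)) (hf : MDifferentiableAt I₁ I₂ f x) :
    finrank 𝕜 (LinearMap.range (mfderiv I₁ I₃ (g ∘ f) x).toLinearMap) ≤
      finrank 𝕜 (LinearMap.range (mfderiv I₂ I₃ g (f x)).toLinearMap) := by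
  -- instance search does not unfold `(g ∘ f) x`, the point at which both ranges are taken
  have : FiniteDimensional 𝕜 (TangentSpace I₃ ((g ∘ f) x)) := ‹FiniteDimensional 𝕜 F₃›
  rw [mfderiv_comp x hg hf]
  exact Submodule.finrank_mono (LinearMap.range_comp_le_range _ _)

end FinrankMfderiv

section CompPath

variable {X : Type*} {γ₁ γ₂ : ℝ → X} {x : X} {ε t : ℝ}

theorem compPath_zero : compPath γ₁ γ₂ 0 = γ₁ 0 := by
  simp [compPath]

theorem compPath_one : compPath γ₁ γ₂ 1 = γ₂ 1 := by
  norm_num [compPath]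

theorem compPath_eq_left_of_lt (h₁ : ∀ t, 1 - ε ≤ t → γ₁ t = x) (h₂ : ∀ t ≤ ε, γ₂ t = x)
    (ht : t < 1 / 2 + ε / 2) : compPath γ₁ γ₂ t = γ₁ (2 * t) := by
  unfold compPath
  split_ifs with h
  · rfl
  · rw [h₁ _ (by linarith), h₂ _ (by linarith)]

theorem compPath_eq_right_of_gt (h₁ : ∀ t, 1 - ε ≤ t → γ₁ t = x) (h₂ : ∀ t ≤ ε, γ₂ t = x)
    (ht : 1 / 2 - ε / 2 < t) : compPath γ₁ γ₂ t = γ₂ (2 * t - 1) := by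
  unfold compPath
  split_ifs with h
  · rw [h₁ _ (by linarith), h₂ _ (by linarith)]
  · rfl

end CompPath

noncomputable def compTwoPath {X : Type*} (g₁ g₂ : ℝ × ℝ → X) : ℝ × ℝ → X :=
  fun p => compPath (fun t => g₁ (p.1, t)) (fun t => g₂ (p.1, t)) p.2

section CompTwoPath

variable {X : Type*} {g₁ g₂ : ℝ × ℝ → X} {s t : ℝ}

theorem compTwoPath_apply : compTwoPath g₁ g₂ (s, t) =
    compPath (fun u => g₁ (s, u)) (fun u => g₂ (s, u)) t := rfl

theorem compTwoPath_of_le_half (ht : t ≤ 1 / 2) : compTwoPath g₁ g₂ (s, t) = g₁ (s, 2 * t) :=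
  if_pos ht

theorem compTwoPath_of_half_lt (ht : 1 / 2 < t) : compTwoPath g₁ g₂ (s, t) = g₂ (s, 2 * t - 1) :=
  if_neg (not_le.2 ht)

theorem compTwoPath_eventuallyEq {x : X} {ε : ℝ} (hε : 0 < ε)
    (h₁ : ∀ s t, 1 - ε ≤ t → g₁ (s, t) = x) (h₂ : ∀ s t, t ≤ ε → g₂ (s, t) = x) (p : ℝ × ℝ) :
    compTwoPath g₁ g₂ =ᶠ[𝓝 p] g₁ ∘ (fun q => (q.1, 2 * q.2)) ∨
      compTwoPath g₁ g₂ =ᶠ[𝓝 p] g₂ ∘ (fun q => (q.1, 2 * q.2 - 1)) := by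
  rcases lt_or_ge p.2 (1 / 2 + ε / 2) with hp | hp
  · left
    filter_upwards [continuous_snd.continuousAt.preimage_mem_nhds (Iio_mem_nhds hp)] with q hq
    exact compPath_eq_left_of_lt (h₁ q.1) (h₂ q.1) hq
  · right
    have hp' : 1 / 2 - ε / 2 < p.2 := by linarith
    filter_upwards [continuous_snd.continuousAt.preimage_mem_nhds (Ioi_mem_nhds hp')] with q hq
    exact compPath_eq_right_of_gt (h₁ q.1) (h₂ q.1) hq

end CompTwoPath

section TwoPath

variable {F : Type*} [NormedAddCommGroup F] [NormedSpace ℝ F] {X : Type*} [TopologicalSpace X]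
  [ChartedSpace F X] {g₁ g₂ : ℝ × ℝ → X}

theorem IsTwoPath.exists_compTwoPath_eventuallyEq_comp (hg₁ : IsTwoPath F g₁)
    (hg₂ : IsTwoPath F g₂) (hmatch : g₁ (0, 1) = g₂ (0, 0)) (p : ℝ × ℝ) :
    ∃ φ : ℝ × ℝ → ℝ × ℝ, ContMDiff 𝓘(ℝ, ℝ × ℝ) 𝓘(ℝ, ℝ × ℝ) (⊤ : ℕ∞) φ ∧
      (compTwoPath g₁ g₂ =ᶠ[𝓝 p] g₁ ∘ φ ∨ compTwoPath g₁ g₂ =ᶠ[𝓝 p] g₂ ∘ φ) := by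
  obtain ⟨-, ⟨ε₁, hε₁, -, -, -, htop₁⟩, -, hconst₁⟩ := hg₁
  obtain ⟨-, ⟨ε₂, hε₂, -, -, hbot₂, -⟩, hconst₂, -⟩ := hg₂
  have htop : ∀ s t, 1 - min ε₁ ε₂ ≤ t → g₁ (s, t) = g₂ (0, 0) := fun s t ht => by
    rw [htop₁ s t (by linarith [min_le_left ε₁ ε₂]), hconst₁ s 0, hmatch]
  have hbot : ∀ s t, t ≤ min ε₁ ε₂ → g₂ (s, t) = g₂ (0, 0) := fun s t ht => by
    rw [hbot₂ s t (ht.trans (min_le_right ε₁ ε₂)), hconst₂ s 0]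
  rcases compTwoPath_eventuallyEq (lt_min hε₁ hε₂) htop hbot p with h | h
  · exact ⟨_, contMDiff_iff_contDiff.2 (by fun_prop), Or.inl h⟩
  · exact ⟨_, contMDiff_iff_contDiff.2 (by fun_prop), Or.inr h⟩

theorem IsTwoPath.compTwoPath (hg₁ : IsTwoPath F g₁) (hg₂ : IsTwoPath F g₂)
    (hmatch : g₁ (0, 1) = g₂ (0, 0)) : IsTwoPath F (compTwoPath g₁ g₂) := by
  have hloc := hg₁.exists_compTwoPath_eventuallyEq_comp hg₂ hmatch
  obtain ⟨hsmooth₁, ⟨ε₁, hε₁, hleft₁, hright₁, hbot₁, -⟩, hconst₁, -⟩ := hg₁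
  obtain ⟨hsmooth₂, ⟨ε₂, hε₂, hleft₂, hright₂, -, htop₂⟩, -, hconst₂⟩ := hg₂
  obtain ⟨δ, hδ, hδ₁, hδ₂, hδ_le⟩ : ∃ δ > 0, 2 * δ ≤ ε₁ ∧ 2 * δ ≤ ε₂ ∧ δ ≤ 1 / 4 :=
    ⟨min (min ε₁ ε₂) (1 / 2) / 2, by positivity,
      by linarith [min_le_left (min ε₁ ε₂) (1 / 2), min_le_left ε₁ ε₂],
      by linarith [min_le_left (min ε₁ ε₂) (1 / 2), min_le_right ε₁ ε₂],
      by linarith [min_le_right (min ε₁ ε₂) (1 / 2)]⟩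
  refine ⟨fun p => ?_, ⟨δ, hδ, ?_, ?_, ?_, ?_⟩, ?_, ?_⟩
  · obtain ⟨φ, hφ, h | h⟩ := hloc p
    · exact ((hsmooth₁.comp hφ) p).congr_of_eventuallyEq h
    · exact ((hsmooth₂.comp hφ) p).congr_of_eventuallyEq h
  · intro s t hs
    rw [compTwoPath_apply, compTwoPath_apply, funext (hleft₁ s · (by linarith)),
      funext (hleft₂ s · (by linarith))]
  · intro s t hs
    rw [compTwoPath_apply, compTwoPath_apply, funext (hright₁ s · (by linarith)),
      funext (hright₂ s · (by linarith))]
  · intro s t ht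
    rw [compTwoPath_of_le_half (by linarith), compTwoPath_of_le_half (by norm_num), mul_zero]
    exact hbot₁ s _ (by linarith)
  · intro s t ht
    rw [compTwoPath_of_half_lt (by linarith), compTwoPath_of_half_lt (by norm_num),
      show (2 : ℝ) * 1 - 1 = 1 by norm_num]
    exact htop₂ s _ (by linarith)
  · intro s s'
    rw [compTwoPath_apply, compTwoPath_apply, compPath_zero, compPath_zero, hconst₁]
  · intro s s'
    rw [compTwoPath_apply, compTwoPath_apply, compPath_one, compPath_one, hconst₂]

theorem IsRank1Homotopy.finrank_range_mfderiv_comp_le_one [FiniteDimensional ℝ F]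
    {g : ℝ × ℝ → X} (hg : IsRank1Homotopy F g) {φ : ℝ × ℝ → ℝ × ℝ} {p : ℝ × ℝ}
    (hφ : MDifferentiableAt 𝓘(ℝ, ℝ × ℝ) 𝓘(ℝ, ℝ × ℝ) φ p) :
    finrank ℝ (LinearMap.range (mfderiv 𝓘(ℝ, ℝ × ℝ) 𝓘(ℝ, F) (g ∘ φ) p).toLinearMap) ≤ 1 :=
  (finrank_range_mfderiv_comp_le (hg.1.1.mdifferentiableAt (by simp)) hφ).trans (hg.2 _)

theorem IsRank1Homotopy.compTwoPath [FiniteDimensional ℝ F] (hg₁ : IsRank1Homotopy F g₁)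
    (hg₂ : IsRank1Homotopy F g₂) (hmatch : g₁ (0, 1) = g₂ (0, 0)) :
    IsRank1Homotopy F (compTwoPath g₁ g₂) := by
  refine ⟨hg₁.1.compTwoPath hg₂.1 hmatch, fun p => ?_⟩
  obtain ⟨φ, hφ, h | h⟩ := hg₁.1.exists_compTwoPath_eventuallyEq_comp hg₂.1 hmatch p
  · rw [h.mfderiv_eq]
    exact hg₁.finrank_range_mfderiv_comp_le_one (hφ.mdifferentiableAt (by simp))
  · rw [h.mfderiv_eq]
    exact hg₂.finrank_range_mfderiv_comp_le_one (hφ.mdifferentiableAt (by simp))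

end TwoPath

theorem compPath_rank1Homotopic (γ₁ γ₁' γ₂ γ₂' : ℝ → M)
    (H₁ : Rank1Homotopic E γ₁ γ₁') (H₂ : Rank1Homotopic E γ₂ γ₂')
    (hmatch : γ₁ 1 = γ₂ 0) :
    Rank1Homotopic E (compPath γ₁ γ₂) (compPath γ₁' γ₂') := by
  obtain ⟨g₁, hg₁, hstart₁, hend₁⟩ := H₁
  obtain ⟨g₂, hg₂, hstart₂, hend₂⟩ := H₂
  refine ⟨compTwoPath g₁ g₂, hg₁.compTwoPath hg₂ (by rw [hstart₁, hstart₂, hmatch]), fun t => ?_,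
    fun t => ?_⟩
  · rw [compTwoPath_apply, funext hstart₁, funext hstart₂]
  · rw [compTwoPath_apply, funext hend₁, funext hend₂]
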